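/- arXiv:2407.09067 — 10 statements merged into one kernel-verified Lean document; each statement's English description precedes it below -/
import Mathlib

section
/- For any graph G and any vertex v of G, the number of 1-nearly independent vertex subsets of G satisfies σ₁(G) = σ₁(G−v) + σ₁(G−N[v]) + Σ_{u∈N(v)} σ₀(G−(N[u]∪N[v])), where G−S denotes deletion of the vertex set S. -/
/-- Number of k-nearly independent vertex subsets: subsets whose induced subgraph has exactly k edges. -/
def sigmaK {V : Type*} [Fintype V] [DecidableEq V] (G : SimpleGraph V) [DecidableRel G.Adj] (k : ℕ) : ℕ :=
  (Finset.univ.filter fun s : Finset V =>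
    (s.sym2.filter fun e => e ∈ G.edgeSet).card = k).card

/-- A graph is good if for every edge uv, N[u] ∪ N[v] = V(G). -/
def IsGoodGraph {V : Type*} (G : SimpleGraph V) : Prop :=
  ∀ u v : V, G.Adj u v →
    (insert u (G.neighborSet u)) ∪ (insert v (G.neighborSet v)) = Set.univ

/-! Split the one-edge sets `s` according to `v`. If `v ∉ s`, then `s` is a one-edge set of
`G - v`. Otherwise `s = insert v t` with `v ∉ t`, and the edges of `s` are those of `t` plus one
for each neighbour of `v` in `t`. So either `t` avoids `N(v)` and has one edge, or `t` contains
exactly one neighbour `u` of `v` and no edge; then `t = insert u t'` with `t'` independent and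
disjoint from `N[u] ∪ N[v]`, and this `u` is unique. -/

open Finset

theorem Finset.card_filter_mem_eq_card_filter_insert {α : Type*} [Fintype α] [DecidableEq α]
    (a : α) (p : Finset α → Prop) [DecidablePred p] :
    #{s : Finset α | a ∈ s ∧ p s} = #{t : Finset α | a ∉ t ∧ p (insert a t)} := by
  symm
  apply card_nbij' (insert a) (·.erase a)
  · intro t ht
    simp only [coe_filter, mem_univ, true_and, Set.mem_ofPred_eq] at ht ⊢
    exact ⟨mem_insert_self a t, ht.2⟩
  · intro s hs
    simp only [coe_filter, mem_univ, true_and, Set.mem_ofPred_eq] at hs ⊢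
    exact ⟨notMem_erase a s, (insert_erase hs.1).symm ▸ hs.2⟩
  · intro t ht
    simp only [coe_filter, mem_univ, true_and, Set.mem_ofPred_eq] at ht
    exact erase_insert ht.1
  · intro s hs
    simp only [coe_filter, mem_univ, true_and, Set.mem_ofPred_eq] at hs
    exact insert_erase hs.1

namespace SimpleGraph

variable {V : Type*} {G : SimpleGraph V} [DecidableRel G.Adj]

variable (G) in
def inducedEdgeCount (s : Finset V) : ℕ := #{e ∈ s.sym2 | e ∈ G.edgeSet}

theorem inducedEdgeCount_insert [DecidableEq V] {a : V} {s : Finset V} (ha : a ∉ s) :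
    G.inducedEdgeCount (insert a s) = #{x ∈ s | G.Adj a x} + G.inducedEdgeCount s := by
  rw [inducedEdgeCount, sym2_insert, filter_union, card_union_of_disjoint]
  · congr 1
    rw [← card_image_of_injective _ (Sym2.mkEmbedding a).injective]
    congr 1
    ext e
    simp only [mem_filter, mem_image, mem_insert, Sym2.mkEmbedding_apply]
    constructor
    · rintro ⟨⟨b, rfl | hb, rfl⟩, he⟩
      · simp at he
      · exact ⟨b, ⟨hb, he⟩, rfl⟩
    · rintro ⟨b, ⟨hb, hab⟩, rfl⟩
      exact ⟨⟨b, Or.inr hb, rfl⟩, hab⟩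
  · refine Finset.disjoint_left.mpr fun e he he' => ?_
    obtain ⟨⟨b, -, rfl⟩, -⟩ := (mem_filter.mp he).imp_left mem_image.mp
    exact ha (mem_sym2_iff.mp (mem_filter.mp he').1 a (Sym2.mem_mk_left a b))

theorem inducedEdgeCount_map_subtype (P : Set V) [DecidablePred (· ∈ P)] (s : Finset P) :
    (G.induce P).inducedEdgeCount s =
      G.inducedEdgeCount (s.map (Function.Embedding.subtype _)) := by
  rw [inducedEdgeCount, inducedEdgeCount, sym2_map, filter_map, card_map]
  refine congrArg card (filter_congr fun e _ => ?_)
  induction e using Sym2.inductionOn with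
  | hf x y => simp [Function.Embedding.sym2Map]

variable [Fintype V] [DecidableEq V]

variable (G) in
theorem sigmaK_eq_card_inducedEdgeCount (k : ℕ) :
    sigmaK G k = #{s : Finset V | G.inducedEdgeCount s = k} := rfl

theorem sigmaK_induce (P : Set V) [DecidablePred (· ∈ P)] (k : ℕ) :
    sigmaK (G.induce P) k =
      #{s : Finset V | (∀ x ∈ s, x ∈ P) ∧ G.inducedEdgeCount s = k} := by
  rw [sigmaK_eq_card_inducedEdgeCount]
  apply card_nbij' (·.map (Function.Embedding.subtype _)) (·.subtype (· ∈ P))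
  · intro s hs
    simp only [coe_filter, mem_univ, true_and, Set.mem_ofPred_eq,
      inducedEdgeCount_map_subtype] at hs ⊢
    exact ⟨fun x => s.property_of_mem_map_subtype, hs⟩
  · intro t ht
    simp only [coe_filter, mem_univ, true_and, Set.mem_ofPred_eq,
      inducedEdgeCount_map_subtype] at ht ⊢
    rw [subtype_map_of_mem ht.1]
    exact ht.2
  · intro s _
    ext
    simp
  · intro t ht
    simp only [coe_filter, mem_univ, true_and, Set.mem_ofPred_eq] at ht
    exact subtype_map_of_mem ht.1

theorem card_mem_inducedEdgeCount_eq_one (v : V) :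
    #{s : Finset V | v ∈ s ∧ G.inducedEdgeCount s = 1} =
      #{t : Finset V | (∀ x ∈ t, x ≠ v ∧ ¬ G.Adj v x) ∧ G.inducedEdgeCount t = 1} +
      #{t : Finset V | (v ∉ t ∧ G.inducedEdgeCount t = 0) ∧ #{x ∈ t | G.Adj v x} = 1} := by
  rw [card_filter_mem_eq_card_filter_insert, ← card_union_of_disjoint, ← filter_or]
  · refine congrArg card (filter_congr fun t _ => ?_)
    by_cases hv : v ∈ t
    · simpa [hv] using fun h => absurd rfl (h v hv).1
    · simp only [hv, not_false_eq_true, true_and, inducedEdgeCount_insert hv, Nat.add_eq_one_iff,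
        card_filter_eq_zero_iff]
      grind
  · refine disjoint_filter.mpr fun t _ h₀ h₁ => ?_
    rw [filter_false_of_mem fun x hx => (h₀.1 x hx).2] at h₁
    simp at h₁

theorem card_filter_card_adj_eq_one_eq_sum (v : V) (p : Finset V → Prop) [DecidablePred p] :
    #{t : Finset V | p t ∧ #{x ∈ t | G.Adj v x} = 1} =
      ∑ u ∈ G.neighborFinset v, #{t : Finset V | p t ∧ {x ∈ t | G.Adj v x} = {u}} := by
  rw [← card_biUnion]
  · congr 1
    ext t
    simp only [mem_filter, mem_univ, true_and, mem_biUnion, mem_neighborFinset, card_eq_one]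
    constructor
    · rintro ⟨ht, u, hu⟩
      have : u ∈ {x ∈ t | G.Adj v x} := hu ▸ mem_singleton_self u
      exact ⟨u, (mem_filter.mp this).2, ht, hu⟩
    · rintro ⟨u, -, ht, hu⟩
      exact ⟨ht, u, hu⟩
  · intro u₁ _ u₂ _ hne
    refine disjoint_filter.mpr fun t _ h₁ h₂ => hne ?_
    exact singleton_injective (h₁.2.symm.trans h₂.2)

theorem card_filter_adj_eq_singleton_eq_card_independent {u v : V} (huv : G.Adj v u) :
    #{t : Finset V | (v ∉ t ∧ G.inducedEdgeCount t = 0) ∧ {x ∈ t | G.Adj v x} = {u}} =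
      #{t : Finset V | (∀ x ∈ t, x ≠ u ∧ x ≠ v ∧ ¬ G.Adj u x ∧ ¬ G.Adj v x) ∧
        G.inducedEdgeCount t = 0} := by
  have hu_mem : ∀ t : Finset V, {x ∈ t | G.Adj v x} = {u} → u ∈ t := fun t h =>
    (mem_filter.mp (h ▸ mem_singleton_self u)).1
  calc _ = #{t : Finset V | u ∈ t ∧ (v ∉ t ∧ G.inducedEdgeCount t = 0) ∧
          {x ∈ t | G.Adj v x} = {u}} :=
        congrArg card (filter_congr fun t _ => ⟨fun h => ⟨hu_mem t h.2, h⟩, And.right⟩)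
    _ = _ := card_filter_mem_eq_card_filter_insert u _
    _ = _ := by
      refine congrArg card (filter_congr fun t _ => ?_)
      by_cases hu : u ∈ t
      · simpa [hu] using fun h => absurd rfl (h u hu).1
      · rw [inducedEdgeCount_insert hu, Nat.add_eq_zero_iff, card_filter_eq_zero_iff]
        simp only [eq_singleton_iff_unique_mem, mem_filter, mem_insert]
        grind [G.ne_of_adj huv]

end SimpleGraph

open SimpleGraph

theorem stmt0 {V : Type*} [Fintype V] [DecidableEq V] (G : SimpleGraph V) [DecidableRel G.Adj]
    (v : V) :
    sigmaK G 1 =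
      sigmaK (G.induce {x | x ≠ v}) 1 +
      sigmaK (G.induce {x | x ≠ v ∧ ¬ G.Adj v x}) 1 +
      ∑ u ∈ G.neighborFinset v,
        sigmaK (G.induce {x | x ≠ u ∧ x ≠ v ∧ ¬ G.Adj u x ∧ ¬ G.Adj v x}) 0 := by
  have hsplit : sigmaK G 1 = #{s : Finset V | (∀ x ∈ s, x ≠ v) ∧ G.inducedEdgeCount s = 1} +
      #{s : Finset V | v ∈ s ∧ G.inducedEdgeCount s = 1} := by
    rw [sigmaK_eq_card_inducedEdgeCount, ← card_union_of_disjoint, ← filter_or]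
    · refine congrArg card (filter_congr fun s _ => ?_)
      by_cases hv : v ∈ s <;> simp [hv]
    · exact disjoint_filter.mpr fun s _ h₁ h₂ => h₁.1 v h₂.1 rfl
  rw [hsplit, card_mem_inducedEdgeCount_eq_one, card_filter_card_adj_eq_one_eq_sum, add_assoc,
    sigmaK_induce, sigmaK_induce]
  congr 2
  refine sum_congr rfl fun u hu => ?_
  rw [card_filter_adj_eq_singleton_eq_card_independent ((mem_neighborFinset G v u).mp hu),
    sigmaK_induce]
  rfl
end

section
/- If G is a connected graph of size m (number of edges), then σ₁(G) ≥ m, with equality if and only if every edge uv of G satisfies N[u] ∪ N[v] = V(G). -/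
/-!
Every edge `e` gives the 1-nearly independent set `e.toFinset`, and distinct edges give distinct
sets, so `σ₁(G) ≥ m`. Equality means that every set whose only induced edge is `uv` is `{u, v}`.
If `uv` is good, any further vertex of such a set is adjacent to `u` or `v`, creating a second
edge; if `uv` is not good, a vertex `w` outside `N[u] ∪ N[v]` makes `{u, v, w}` a 1-nearly
independent set that is not an edge.
-/

open Finset

lemma Sym2.toFinset_injective {α : Type*} [DecidableEq α] :
    Function.Injective (Sym2.toFinset : Sym2 α → Finset α) := fun z z' h =>
  Sym2.ext fun a => by rw [← Sym2.mem_toFinset, h, Sym2.mem_toFinset]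

namespace SimpleGraph

variable {V : Type*} (G : SimpleGraph V) [DecidableRel G.Adj]

def inducedEdges (s : Finset V) : Finset (Sym2 V) :=
  s.sym2.filter (· ∈ G.edgeSet)

variable {G}

lemma mem_inducedEdges {s : Finset V} {e : Sym2 V} :
    e ∈ G.inducedEdges s ↔ e ∈ s.sym2 ∧ e ∈ G.edgeSet :=
  mem_filter

lemma inducedEdges_toFinset [DecidableEq V] {e : Sym2 V} (he : e ∈ G.edgeSet) :
    G.inducedEdges e.toFinset = {e} := by
  induction e using Sym2.ind with
  | _ u v =>
    have huv : G.Adj u v := he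
    ext f
    induction f using Sym2.ind with
    | _ a b =>
      simp only [Sym2.toFinset_mk_eq, mem_inducedEdges, mk_mem_sym2_iff, mem_insert,
        mem_singleton, mem_edgeSet, Sym2.eq_iff]
      constructor
      · rintro ⟨⟨rfl | rfl, rfl | rfl⟩, hab⟩ <;> simp_all
      · rintro (⟨rfl, rfl⟩ | ⟨rfl, rfl⟩) <;> simp [huv, huv.symm]

lemma inducedEdges_insert_of_forall_not_adj [DecidableEq V] {s : Finset V} {w : V}
    (hw : ∀ x ∈ s, ¬G.Adj w x) : G.inducedEdges (insert w s) = G.inducedEdges s := by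
  ext e
  simp only [mem_inducedEdges, sym2_insert, mem_union, mem_image, mem_insert]
  constructor
  · rintro ⟨⟨x, rfl | hx, rfl⟩ | he, hadj⟩
    · exact absurd hadj G.irrefl
    · exact absurd hadj (hw x hx)
    · exact ⟨he, hadj⟩
  · exact fun ⟨he, hadj⟩ => ⟨Or.inr he, hadj⟩

lemma closedNbhd_union_eq_univ_iff [DecidableEq V] {u v : V} (huv : G.Adj u v) :
    insert u (G.neighborSet u) ∪ insert v (G.neighborSet v) = Set.univ ↔
      ∀ s : Finset V, G.inducedEdges s = {s(u, v)} → s = {u, v} := by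
  constructor
  · intro hgood s hs
    have hmem : ∀ {e}, e ∈ s.sym2 → e ∈ G.edgeSet → e = s(u, v) := fun h₁ h₂ =>
      mem_singleton.mp (hs ▸ mem_inducedEdges.mpr ⟨h₁, h₂⟩)
    obtain ⟨hu, hv⟩ : u ∈ s ∧ v ∈ s :=
      mk_mem_sym2_iff.mp (mem_inducedEdges.mp (hs ▸ mem_singleton_self _)).1
    refine Subset.antisymm (fun w hw => ?_) (insert_subset hu (singleton_subset_iff.mpr hv))
    have hw' : w ∈ insert u (G.neighborSet u) ∪ insert v (G.neighborSet v) := hgood ▸ trivial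
    simp only [mem_insert, mem_singleton]
    rcases hw' with (rfl | hadj) | (rfl | hadj)
    · exact .inl rfl
    · have := hmem (mk_mem_sym2_iff.mpr ⟨hu, hw⟩) hadj
      grind [Sym2.eq_iff, G.loopless]
    · exact .inr rfl
    · have := hmem (mk_mem_sym2_iff.mpr ⟨hv, hw⟩) hadj
      grind [Sym2.eq_iff, G.loopless]
  · intro hpair
    refine Set.eq_univ_of_forall fun w => ?_
    by_contra hw
    simp only [Set.mem_union, Set.mem_insert_iff, mem_neighborSet, not_or] at hw
    obtain ⟨⟨hwu, hadju⟩, hwv, hadjv⟩ := hw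
    have hedges : G.inducedEdges {w, u, v} = {s(u, v)} := by
      rw [inducedEdges_insert_of_forall_not_adj (by simp [G.adj_comm w, hadju, hadjv]),
        ← Sym2.toFinset_mk_eq, inducedEdges_toFinset huv]
    have := hpair _ hedges
    grind

section Fintype

variable [Fintype V] [DecidableEq V]

variable (G) in
def nearlyIndependentSets (k : ℕ) : Finset (Finset V) :=
  univ.filter fun s => #(G.inducedEdges s) = k

lemma sigmaK_eq_card_nearlyIndependentSets (k : ℕ) :
    sigmaK G k = #(G.nearlyIndependentSets k) :=
  rfl

lemma image_toFinset_edgeFinset_subset :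
    G.edgeFinset.image Sym2.toFinset ⊆ G.nearlyIndependentSets 1 := by
  intro s hs
  obtain ⟨e, he, rfl⟩ := mem_image.mp hs
  simp [nearlyIndependentSets, inducedEdges_toFinset (mem_edgeFinset.mp he)]

lemma card_image_toFinset_edgeFinset :
    #(G.edgeFinset.image Sym2.toFinset) = #G.edgeFinset :=
  card_image_of_injective _ Sym2.toFinset_injective

lemma nearlyIndependentSets_one_subset_iff :
    G.nearlyIndependentSets 1 ⊆ G.edgeFinset.image Sym2.toFinset ↔ IsGoodGraph G := by
  constructor
  · intro h u v huv
    rw [closedNbhd_union_eq_univ_iff huv]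
    intro s hs
    have hsF : s ∈ G.nearlyIndependentSets 1 := by simp [nearlyIndependentSets, hs]
    obtain ⟨e, he, rfl⟩ := mem_image.mp (h hsF)
    rw [inducedEdges_toFinset (mem_edgeFinset.mp he), singleton_inj] at hs
    rw [hs, Sym2.toFinset_mk_eq]
  · intro hgood s hs
    obtain ⟨e, he⟩ := card_eq_one.mp (mem_filter.mp hs).2
    have heE : e ∈ G.edgeSet := (mem_inducedEdges.mp (he ▸ mem_singleton_self e)).2
    induction e using Sym2.ind with
    | _ u v =>
      have hs' := (closedNbhd_union_eq_univ_iff heE).mp (hgood u v heE) s he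
      exact mem_image.mpr ⟨s(u, v), mem_edgeFinset.mpr heE, by rw [hs', Sym2.toFinset_mk_eq]⟩

end Fintype

end SimpleGraph

theorem stmt1_general {V : Type*} [Fintype V] [DecidableEq V] (G : SimpleGraph V) [DecidableRel G.Adj] :
    G.edgeFinset.card ≤ sigmaK G 1 ∧
      (sigmaK G 1 = G.edgeFinset.card ↔ IsGoodGraph G) := by
  have hsub := G.image_toFinset_edgeFinset_subset
  rw [SimpleGraph.sigmaK_eq_card_nearlyIndependentSets,
    ← SimpleGraph.card_image_toFinset_edgeFinset, ← SimpleGraph.nearlyIndependentSets_one_subset_iff]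
  exact ⟨card_le_card hsub,
    fun h => (eq_of_subset_of_card_le hsub h.le).superset,
    fun h => le_antisymm (card_le_card h) (card_le_card hsub)⟩

theorem stmt1 {V : Type*} [Fintype V] [DecidableEq V] (G : SimpleGraph V) [DecidableRel G.Adj]
    (hconn : G.Connected) :
    G.edgeFinset.card ≤ sigmaK G 1 ∧
      (sigmaK G 1 = G.edgeFinset.card ↔ IsGoodGraph G) :=
  stmt1_general G
end

section
/- If G is a good graph that contains a cycle, then G does not contain a bridge. -/
/-! A bridge `uv` lies on no cycle, so a cycle `C` survives in `G - uv`. Each endpoint, say `u`, is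
joined to `C` in `G - uv`: pick an edge `xy` of `C` avoiding `v`; goodness puts `u` in `N[x] ∪ N[y]`,
and the edge from `u` to `x` or `y` is not `uv`. Hence `u` and `v` are still joined. -/

namespace SimpleGraph

variable {V : Type*} {G : SimpleGraph V}

lemma Walk.IsCycle.exists_mem_edges_avoiding_start {w : V} {c : G.Walk w w} (hc : c.IsCycle) :
    ∃ x y, s(x, y) ∈ c.edges ∧ x ≠ w ∧ y ≠ w := by
  have hlen := hc.three_le_length
  refine ⟨c.getVert 1, c.getVert 2, c.mk_mem_edges_iff_exists.2 ⟨1, by omega, rfl⟩, ?_, ?_⟩ <;>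
  · rw [Ne, hc.getVert_endpoint_iff (by omega)]
    omega

lemma Walk.IsCycle.exists_mem_edges_avoiding [DecidableEq V] {a : V} {c : G.Walk a a}
    (hc : c.IsCycle) (w : V) : ∃ x y, s(x, y) ∈ c.edges ∧ x ≠ w ∧ y ≠ w := by
  by_cases hw : w ∈ c.support
  · obtain ⟨x, y, hxy, hx, hy⟩ := (hc.rotate hw).exists_mem_edges_avoiding_start
    exact ⟨x, y, (c.rotate_edges w hw).mem_iff.mp hxy, hx, hy⟩
  · obtain ⟨x, y, hxy, -, -⟩ := hc.exists_mem_edges_avoiding_start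
    exact ⟨x, y, hxy, ne_of_mem_of_not_mem (c.fst_mem_support_of_mem_edges hxy) hw,
      ne_of_mem_of_not_mem (c.snd_mem_support_of_mem_edges hxy) hw⟩

end SimpleGraph

open SimpleGraph

lemma IsGoodGraph.eq_or_adj {V : Type*} {G : SimpleGraph V} (hG : IsGoodGraph G) {x y : V}
    (hxy : G.Adj x y) (w : V) : (w = x ∨ G.Adj x w) ∨ (w = y ∨ G.Adj y w) := by
  simpa only [Set.mem_union, Set.mem_insert_iff, mem_neighborSet] using
    Set.eq_univ_iff_forall.mp (hG x y hxy) w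

lemma IsGoodGraph.reachable_deleteEdges_of_isCycle {V : Type*} {G : SimpleGraph V}
    (hG : IsGoodGraph G) {a : V} {c : G.Walk a a} (hc : c.IsCycle) {u v : V}
    (huv : s(u, v) ∉ c.edges) : (G.deleteEdges {s(u, v)}).Reachable a u := by
  classical
  have onCycle : ∀ z ∈ c.support, (G.deleteEdges {s(u, v)}).Reachable a z := fun z hz =>
    ((c.toDeleteEdge _ huv).takeUntil z (by simpa using hz)).reachable
  have nearCycle : ∀ z ∈ c.support, z ≠ v → u = z ∨ G.Adj z u →
      (G.deleteEdges {s(u, v)}).Reachable a u := by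
    rintro z hz hzv (rfl | hzu)
    · exact onCycle _ hz
    · refine (onCycle z hz).trans (Adj.reachable ?_)
      simp [deleteEdges_adj, hzu, hzv, hzu.ne]
  obtain ⟨x, y, hxy, hxv, hyv⟩ := hc.exists_mem_edges_avoiding v
  rcases hG.eq_or_adj (c.adj_of_mem_edges hxy) u with hx | hy
  · exact nearCycle x (c.fst_mem_support_of_mem_edges hxy) hxv hx
  · exact nearCycle y (c.snd_mem_support_of_mem_edges hxy) hyv hy

theorem stmt4 {V : Type*} (G : SimpleGraph V)
    (hgood : IsGoodGraph G) (hcyc : ¬ G.IsAcyclic) :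
    ∀ e : Sym2 V, ¬ G.IsBridge e := by
  obtain ⟨a, c, hc⟩ : ∃ (a : V) (c : G.Walk a a), c.IsCycle := by
    simpa [IsAcyclic] using hcyc
  rintro ⟨u, v⟩ hbridge
  have huv : s(u, v) ∉ c.edges := hbridge.notMem_edges_of_isCycle hc
  have hvu : s(v, u) ∉ c.edges := by rwa [Sym2.eq_swap]
  have hu := hgood.reachable_deleteEdges_of_isCycle hc huv
  have hv := hgood.reachable_deleteEdges_of_isCycle hc hvu
  rw [Sym2.eq_swap] at hv
  exact isBridge_iff.mp hbridge (hu.symm.trans hv)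
end

section
/- If G is a good graph containing a cycle, then every vertex of G has degree at least 2. -/
/-!
Every vertex v of a good graph is adjacent to an endpoint of any given edge. Applied to an edge
of a cycle, this makes v adjacent to some cycle vertex x. A cycle through x contains a path
x - y - z with z ≠ x, and applying goodness to the edge yz gives v a second neighbor in {y, z}.
-/

namespace SimpleGraph

variable {V : Type*} {G : SimpleGraph V}

lemma two_le_degree_of_adj_of_adj [Fintype V] [DecidableRel G.Adj] {v x y : V} (hxy : x ≠ y)
    (hvx : G.Adj v x) (hvy : G.Adj v y) : 2 ≤ G.degree v := by
  rw [← card_neighborFinset_eq_degree]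
  exact Finset.one_lt_card.mpr ⟨x, by simpa, y, by simpa, hxy⟩

lemma Walk.IsCycle.exists_adj_adj_ne {u : V} {c : G.Walk u u} (hc : c.IsCycle) :
    ∃ y z, G.Adj u y ∧ G.Adj y z ∧ u ≠ z := by
  have hlen := hc.three_le_length
  refine ⟨c.getVert 1, c.getVert 2, ?_, c.adj_getVert_succ (by omega), ?_⟩
  · simpa using c.adj_getVert_succ (i := 0) (by omega)
  · simpa using hc.getVert_sub_one_ne_getVert_add_one (i := 1) (by omega)

end SimpleGraph

namespace IsGoodGraph

open SimpleGraph

variable {V : Type*} {G : SimpleGraph V}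

lemma adj_or_adj (hgood : IsGoodGraph G) {y z : V} (hyz : G.Adj y z) (v : V) :
    G.Adj v y ∨ G.Adj v z := by
  have hv : v ∈ insert y (G.neighborSet y) ∪ insert z (G.neighborSet z) := by
    rw [hgood y z hyz]
    trivial
  rcases hv with (rfl | hv) | (rfl | hv)
  · exact .inr hyz
  · exact .inl (G.adj_symm hv)
  · exact .inl hyz.symm
  · exact .inr (G.adj_symm hv)

lemma two_le_degree_of_adj_mem_support [Fintype V] [DecidableRel G.Adj]
    (hgood : IsGoodGraph G) {u x v : V} {c : G.Walk u u} (hc : c.IsCycle) (hx : x ∈ c.support)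
    (hvx : G.Adj v x) : 2 ≤ G.degree v := by
  classical
  obtain ⟨y, z, hxy, hyz, hxz⟩ := ((Walk.isCycle_rotate hx).mpr hc).exists_adj_adj_ne
  rcases hgood.adj_or_adj hyz v with hvy | hvz
  · exact two_le_degree_of_adj_of_adj hxy.ne hvx hvy
  · exact two_le_degree_of_adj_of_adj hxz hvx hvz

end IsGoodGraph

theorem stmt6 {V : Type*} [Fintype V] (G : SimpleGraph V) [DecidableRel G.Adj]
    (hgood : IsGoodGraph G) (hcyc : ¬ G.IsAcyclic) :
    ∀ v : V, 2 ≤ G.degree v := by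
  obtain ⟨u, c, hc⟩ : ∃ (u : V) (c : G.Walk u u), c.IsCycle := by
    simpa [SimpleGraph.IsAcyclic] using hcyc
  intro v
  rcases hgood.adj_or_adj (c.adj_snd hc.not_nil) v with hvu | hvs
  · exact hgood.two_le_degree_of_adj_mem_support hc c.start_mem_support hvu
  · exact hgood.two_le_degree_of_adj_mem_support hc (c.getVert_mem_support 1) hvs
end

section
/- Let G be a connected graph of order n ≥ 4 containing a cycle, with a vertex v of degree n−1, such that G − v is connected and σ₁(G − v) ≥ 2(n−1) − 4. Then σ₁(G) ≥ (2n − 4) + (n − 3) > 2n − 4. -/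
theorem stmt13 {V : Type*} [Fintype V] [DecidableEq V] (G : SimpleGraph V) [DecidableRel G.Adj]
    (n : ℕ) (hcard : Fintype.card V = n) (hn : 4 ≤ n)
    (hconn : G.Connected) (hcyc : ¬ G.IsAcyclic)
    (v : V) (hdeg : G.degree v = n - 1)
    (hconn' : (G.induce {x | x ≠ v}).Connected)
    (hrec : 2 * (n - 1) - 4 ≤ sigmaK (G.induce {x | x ≠ v}) 1) :
    (2 * n - 4) + (n - 3) ≤ sigmaK G 1 ∧ 2 * n - 4 < (2 * n - 4) + (n - 3) := by
  classical
  -- v is adjacent to every other vertex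
  have hfull : ∀ u : V, u ≠ v → G.Adj v u := by
    have hsub : G.neighborFinset v ⊆ Finset.univ.erase v := by
      intro u hu
      simp only [SimpleGraph.mem_neighborFinset] at hu
      exact Finset.mem_erase.2 ⟨hu.ne', Finset.mem_univ u⟩
    have hcard' : (Finset.univ.erase v).card = n - 1 := by
      rw [Finset.card_erase_of_mem (Finset.mem_univ v), Finset.card_univ, hcard]
    have heq : G.neighborFinset v = Finset.univ.erase v := by
      apply Finset.eq_of_subset_of_card_le hsub
      rw [hcard', ← hdeg]
      exact le_of_eq (SimpleGraph.card_neighborFinset_eq_degree G v).symm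
    intro u hu
    have : u ∈ G.neighborFinset v := by
      rw [heq]; exact Finset.mem_erase.2 ⟨hu, Finset.mem_univ u⟩
    exact (SimpleGraph.mem_neighborFinset G v u).1 this
  set e : {x : V // x ≠ v} ↪ V := Function.Embedding.subtype _ with he
  -- edge count preserved by mapping subsets of the induced graph into V
  have hcount : ∀ s : Finset {x : V // x ≠ v},
      (((s.map e).sym2).filter (fun q => q ∈ G.edgeSet)).card
        = ((s.sym2).filter (fun q => q ∈ (G.induce {x | x ≠ v}).edgeSet)).card := by
    intro s
    rw [Finset.sym2_map, Finset.filter_map, Finset.card_map]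
    congr 1
    apply Finset.filter_congr
    intro q _
    induction q with
    | _ a b =>
      simp [SimpleGraph.mem_edgeSet, he, Sym2.map_pair_eq, SimpleGraph.comap_adj]
  -- the family of subsets avoiding v with exactly one edge
  set A : Finset (Finset {x : V // x ≠ v}) := Finset.univ.filter
      (fun s => ((s.sym2).filter (fun q => q ∈ (G.induce {x | x ≠ v}).edgeSet)).card = 1) with hA
  have hAcard : A.card = sigmaK (G.induce {x | x ≠ v}) 1 := rfl
  set F : Finset {x : V // x ≠ v} ↪ Finset V := ⟨fun s => s.map e,
    fun s t hst => Finset.map_injective e hst⟩ with hF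
  -- the family of pairs {v, u}
  set P : Finset (Finset V) := (Finset.univ.erase v).image (fun u => ({v, u} : Finset V)) with hP
  have hPcard : P.card = n - 1 := by
    rw [hP, Finset.card_image_of_injOn, Finset.card_erase_of_mem (Finset.mem_univ v),
      Finset.card_univ, hcard]
    intro a ha b hb hab
    simp only at hab
    have : a ∈ ({v, b} : Finset V) := by rw [← hab]; simp
    rcases Finset.mem_insert.1 this with h | h
    · exact absurd h (Finset.mem_erase.1 ha).1
    · exact Finset.mem_singleton.1 h
  set B : Finset (Finset V) := Finset.univ.filter
      (fun s : Finset V => ((s.sym2).filter (fun q => q ∈ G.edgeSet)).card = 1) with hB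
  have hBcard : B.card = sigmaK G 1 := by rw [hB, sigmaK]
  -- A maps into B
  have hAB : A.map F ⊆ B := by
    intro s hs
    rcases Finset.mem_map.1 hs with ⟨t, ht, rfl⟩
    rw [hA, Finset.mem_filter] at ht
    rw [hB, Finset.mem_filter]
    refine ⟨Finset.mem_univ _, ?_⟩
    rw [hF]
    exact (hcount t).trans ht.2
  -- P is contained in B
  have hPB : P ⊆ B := by
    intro s hs
    rcases Finset.mem_image.1 hs with ⟨u, hu, rfl⟩
    have huv : u ≠ v := (Finset.mem_erase.1 hu).1
    rw [hB, Finset.mem_filter]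
    refine ⟨Finset.mem_univ _, ?_⟩
    have : (({v, u} : Finset V).sym2).filter (fun q => q ∈ G.edgeSet) = {s(v, u)} := by
      ext q
      induction q with
      | _ a b =>
        simp only [Finset.mem_filter, Finset.mk_mem_sym2_iff, Finset.mem_insert,
          Finset.mem_singleton, SimpleGraph.mem_edgeSet]
        constructor
        · rintro ⟨⟨ha, hb⟩, hadj⟩
          have hne : a ≠ b := hadj.ne
          rcases ha with rfl | rfl <;> rcases hb with rfl | rfl
          · exact absurd rfl hne
          · rfl
          · exact Sym2.eq_swap
          · exact absurd rfl hne
        · intro h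
          rw [Sym2.eq_iff] at h
          rcases h with ⟨ha, hb⟩ | ⟨ha, hb⟩
          · exact ⟨⟨Or.inl ha, Or.inr hb⟩, by rw [ha, hb]; exact hfull u huv⟩
          · exact ⟨⟨Or.inr ha, Or.inl hb⟩, by rw [ha, hb]; exact (hfull u huv).symm⟩
    rw [this, Finset.card_singleton]
  -- disjointness
  have hdisj : Disjoint (A.map F) P := by
    rw [Finset.disjoint_left]
    intro s hs hsP
    rcases Finset.mem_map.1 hs with ⟨t, _, rfl⟩
    rcases Finset.mem_image.1 hsP with ⟨u, _, heq⟩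
    have hv : v ∈ F t := by rw [← heq]; simp
    rw [hF] at hv
    rcases Finset.mem_map.1 hv with ⟨⟨x, hx⟩, _, hxv⟩
    exact hx hxv
  have hunion : (A.map F) ∪ P ⊆ B := Finset.union_subset hAB hPB
  have hle : A.card + (n - 1) ≤ B.card := by
    calc A.card + (n - 1) = (A.map F).card + P.card := by rw [Finset.card_map, hPcard]
    _ = ((A.map F) ∪ P).card := (Finset.card_union_of_disjoint hdisj).symm
    _ ≤ B.card := Finset.card_le_card hunion
  rw [hAcard] at hle
  rw [← hBcard]
  constructor
  · omega
  · omega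
end

section
/- If G is a good graph of order n containing a cycle with minimum degree δ(G) = 2, then the maximum degree satisfies Δ(G) ≥ n − 2. -/
/-! Along an edge `uv` of a good graph the open neighbourhoods already cover all vertices, since
`u ∈ N(v)` and `v ∈ N(u)`; hence `n ≤ deg u + deg v`. A vertex of degree `δ = 2` has some
neighbour, whose degree is therefore at least `n - 2`. -/

namespace IsGoodGraph

variable {V : Type*} {G : SimpleGraph V}

theorem neighborSet_union_eq_univ (hG : IsGoodGraph G) {u v : V} (huv : G.Adj u v) :
    G.neighborSet u ∪ G.neighborSet v = Set.univ := by
  have hv : v ∈ G.neighborSet u ∪ G.neighborSet v := Or.inl huv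
  have hu : u ∈ G.neighborSet u ∪ G.neighborSet v := Or.inr huv.symm
  rw [← hG u v huv, Set.insert_union, Set.union_insert, Set.insert_eq_of_mem hv,
    Set.insert_eq_of_mem hu]

theorem card_le_degree_add_degree [Fintype V] [DecidableRel G.Adj] (hG : IsGoodGraph G)
    {u v : V} (huv : G.Adj u v) : Fintype.card V ≤ G.degree u + G.degree v := by
  classical
  have hcover : G.neighborFinset u ∪ G.neighborFinset v = Finset.univ :=
    Finset.eq_univ_of_forall fun w => by
      simpa using (hG.neighborSet_union_eq_univ huv).ge (Set.mem_univ w)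
  calc Fintype.card V = (G.neighborFinset u ∪ G.neighborFinset v).card := by
        rw [hcover, Finset.card_univ]
    _ ≤ G.degree u + G.degree v := Finset.card_union_le _ _

end IsGoodGraph

theorem stmt14_general {V : Type*} [Fintype V] [Nonempty V] (G : SimpleGraph V) [DecidableRel G.Adj]
    (hgood : IsGoodGraph G)
    (hmin : G.minDegree = 2) :
    Fintype.card V - 2 ≤ G.maxDegree := by
  obtain ⟨u, hu⟩ := G.exists_minimal_degree_vertex
  obtain ⟨v, huv⟩ : ∃ v, G.Adj u v :=
    G.degree_pos_iff_exists_adj u |>.mp (by omega)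
  have hcard := hgood.card_le_degree_add_degree huv
  have hv := G.degree_le_maxDegree v
  omega

theorem stmt14 {V : Type*} [Fintype V] [Nonempty V] (G : SimpleGraph V) [DecidableRel G.Adj]
    (hgood : IsGoodGraph G) (hcyc : ¬ G.IsAcyclic)
    (hmin : G.minDegree = 2) :
    Fintype.card V - 2 ≤ G.maxDegree :=
  stmt14_general G hgood hmin
end

section
/- If G is a good graph of order n with δ(G) = 2 and Δ(G) = n − 2, then every vertex of degree 2 in G has both of its neighbors of degree n − 2. -/
theorem stmt15_general {V : Type*} [Fintype V] (G : SimpleGraph V) [DecidableRel G.Adj]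
    (hgood : IsGoodGraph G)
    (hmax : G.maxDegree = Fintype.card V - 2) :
    ∀ v : V, G.degree v = 2 → ∀ u : V, G.Adj v u → G.degree u = Fintype.card V - 2 := by
  intro v hv u hvu
  have hlower := hgood.card_le_degree_add_degree hvu
  have hupper := hmax ▸ G.degree_le_maxDegree u
  omega

theorem stmt15 {V : Type*} [Fintype V] [Nonempty V] (G : SimpleGraph V) [DecidableRel G.Adj]
    (hgood : IsGoodGraph G)
    (hmin : G.minDegree = 2) (hmax : G.maxDegree = Fintype.card V - 2) :
    ∀ v : V, G.degree v = 2 → ∀ u : V, G.Adj v u → G.degree u = Fintype.card V - 2 :=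
  stmt15_general G hgood hmax
end

section
/- If G is a good graph of order n with δ(G) = 2 and Δ(G) = n − 2, then every vertex of degree n − 2 in G has all of its neighbors of degree 2. -/
/-!
Let `v` have degree `n - 2` and let `w` be its unique non-neighbour. In a good graph the
neighbourhood of every vertex meets every edge, so a vertex not adjacent to `z` has all its
neighbours inside `N(z)`. Hence `N(v) ⊆ N(w)`, and for `n ≥ 5` a vertex `z` of degree `2` is
neither `v` nor `w`, so `N(z) = {v, w}`. A neighbour `u` of `v` is not in `{v, w}`, hence not
adjacent to `z`, so `deg u ≤ deg z = 2`. For `n = 4` the bound `deg u ≤ Δ = 2` is immediate.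
-/

lemma SimpleGraph.exists_unique_not_adj_of_degree_add_two_eq {V : Type*} [Fintype V]
    {G : SimpleGraph V} [DecidableRel G.Adj] {v : V} (hv : G.degree v + 2 = Fintype.card V) :
    ∃ w, w ≠ v ∧ ¬ G.Adj v w ∧ ∀ x, x ≠ v → ¬ G.Adj v x → x = w := by
  classical
  have hcard : (insert v (G.neighborFinset v))ᶜ.card = 1 := by
    rw [Finset.card_compl, Finset.card_insert_of_notMem (G.notMem_neighborFinset_self v),
      G.card_neighborFinset_eq_degree]
    omega
  obtain ⟨w, hw⟩ := Finset.card_eq_one.mp hcard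
  have hmem : ∀ x, x ≠ v → ¬ G.Adj v x → x = w := fun x hxv hvx => by
    rw [← Finset.mem_singleton, ← hw]
    simp [hxv, hvx]
  have hw' : w ∈ (insert v (G.neighborFinset v))ᶜ := hw ▸ Finset.mem_singleton_self w
  simp only [Finset.mem_compl, Finset.mem_insert, SimpleGraph.mem_neighborFinset, not_or] at hw'
  exact ⟨w, hw'.1, hw'.2, hmem⟩

namespace IsGoodGraph

variable {V : Type*} {G : SimpleGraph V}

theorem adj_or_adj_s16 (hG : IsGoodGraph G) {u x : V} (h : G.Adj u x) (z : V) :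
    G.Adj z u ∨ G.Adj z x := by
  have hz : z ∈ insert u (G.neighborSet u) ∪ insert x (G.neighborSet x) := by
    rw [hG u x h]; trivial
  simp only [Set.mem_union, Set.mem_insert_iff, SimpleGraph.mem_neighborSet] at hz
  rcases hz with (rfl | hz) | (rfl | hz)
  · exact .inr h
  · exact .inl hz.symm
  · exact .inl h.symm
  · exact .inr hz.symm

theorem neighborSet_subset_of_not_adj (hG : IsGoodGraph G) {u z : V} (h : ¬ G.Adj z u) :
    G.neighborSet u ⊆ G.neighborSet z := fun _ hx =>
  (hG.adj_or_adj_s16 hx z).resolve_left h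

theorem degree_le_of_not_adj [Fintype V] [DecidableRel G.Adj] (hG : IsGoodGraph G) {u z : V}
    (h : ¬ G.Adj z u) : G.degree u ≤ G.degree z := by
  rw [← G.card_neighborFinset_eq_degree, ← G.card_neighborFinset_eq_degree]
  exact Finset.card_le_card (Set.toFinset_subset_toFinset.mpr (hG.neighborSet_subset_of_not_adj h))

theorem degree_le_two_of_adj_of_degree_add_two_eq [Fintype V] [DecidableRel G.Adj]
    (hG : IsGoodGraph G) {v u z : V} (hv : G.degree v + 2 = Fintype.card V)
    (hn : 5 ≤ Fintype.card V) (hz : G.degree z = 2) (hvu : G.Adj v u) : G.degree u ≤ 2 := by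
  classical
  obtain ⟨w, hwv, hvw, hw⟩ := G.exists_unique_not_adj_of_degree_add_two_eq hv
  have hdeg_w : G.degree v ≤ G.degree w := hG.degree_le_of_not_adj fun h => hvw h.symm
  have hzv : z ≠ v := by rintro rfl; omega
  have hzw : z ≠ w := by rintro rfl; omega
  have hzv_adj : G.Adj z v := by
    by_contra h
    exact hzw (hw z hzv fun h' => h h'.symm)
  have hzw_adj : G.Adj z w :=
    ((hG.adj_or_adj_s16 hzv_adj.symm w).resolve_left fun h => hvw h.symm).symm
  by_cases hzu : G.Adj z u
  · have huv : u ≠ v := hvu.ne'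
    have huw : u ≠ w := by rintro rfl; exact hvw hvu
    have hsub : ({u, v, w} : Finset V) ⊆ G.neighborFinset z := by
      intro x hx
      simp only [Finset.mem_insert, Finset.mem_singleton] at hx
      rcases hx with rfl | rfl | rfl <;> simpa
    have := Finset.card_le_card hsub
    rw [Finset.card_insert_of_notMem (by simp [huv, huw]),
      Finset.card_pair hwv.symm, G.card_neighborFinset_eq_degree] at this
    omega
  · exact hz ▸ hG.degree_le_of_not_adj hzu

end IsGoodGraph

theorem stmt16_general {V : Type*} [Fintype V] (G : SimpleGraph V) [DecidableRel G.Adj]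
    (hgood : IsGoodGraph G)
    (hmin : G.minDegree = 2) (hmax : G.maxDegree = Fintype.card V - 2) :
    ∀ v : V, G.degree v = Fintype.card V - 2 → ∀ u : V, G.Adj v u → G.degree u = 2 := by
  intro v hv u hvu
  have hu : 2 ≤ G.degree u := hmin ▸ G.minDegree_le_degree u
  have hv2 : 2 ≤ G.degree v := hmin ▸ G.minDegree_le_degree v
  have hvn : G.degree v < Fintype.card V := G.degree_lt_card_verts v
  suffices G.degree u ≤ 2 by omega
  rcases (show Fintype.card V = 4 ∨ 5 ≤ Fintype.card V by omega) with hn | hn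
  · have := hmax ▸ G.degree_le_maxDegree u
    omega
  · have : Nonempty V := ⟨v⟩
    obtain ⟨z, hz⟩ := G.exists_minimal_degree_vertex
    exact hgood.degree_le_two_of_adj_of_degree_add_two_eq (by omega) hn (hz ▸ hmin) hvu

theorem stmt16 {V : Type*} [Fintype V] [Nonempty V] (G : SimpleGraph V) [DecidableRel G.Adj]
    (hgood : IsGoodGraph G)
    (hmin : G.minDegree = 2) (hmax : G.maxDegree = Fintype.card V - 2) :
    ∀ v : V, G.degree v = Fintype.card V - 2 → ∀ u : V, G.Adj v u → G.degree u = 2 :=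
  stmt16_general G hgood hmin hmax
end

section
/- If G is a good graph of order n with δ(G) = 2 and Δ(G) = n − 2, then every vertex of G has degree either 2 or n − 2. -/
theorem stmt17 {V : Type*} [Fintype V] [Nonempty V] (G : SimpleGraph V) [DecidableRel G.Adj]
    (hgood : IsGoodGraph G)
    (hmin : G.minDegree = 2) (hmax : G.maxDegree = Fintype.card V - 2) :
    ∀ v : V, G.degree v = 2 ∨ G.degree v = Fintype.card V - 2 := by
  classical
  obtain ⟨w, hw⟩ := G.exists_minimal_degree_vertex
  rw [hmin] at hw
  have hw2 : (G.neighborFinset w).card = 2 := (G.card_neighborFinset_eq_degree w).trans hw.symm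
  obtain ⟨a, b, hab, hNw⟩ := Finset.card_eq_two.mp hw2
  have haw : G.Adj w a := by
    have : a ∈ G.neighborFinset w := by rw [hNw]; simp
    exact (SimpleGraph.mem_neighborFinset ..).mp this
  have hbw : G.Adj w b := by
    have : b ∈ G.neighborFinset w := by rw [hNw]; simp
    exact (SimpleGraph.mem_neighborFinset ..).mp this
  -- key: any p adjacent to w is adjacent to everything except a, b, p
  have key : ∀ p, G.Adj w p → ∀ x, x ≠ a → x ≠ b → x ≠ p → G.Adj p x := by
    intro p hp x hxa hxb hxp
    by_cases hxw : x = w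
    · subst hxw; exact hp.symm
    · have hx : x ∈ (insert w (G.neighborSet w)) ∪ (insert p (G.neighborSet p)) := by
        rw [hgood w p hp]; trivial
      rcases hx with hx | hx
      · rcases Set.mem_insert_iff.mp hx with h | h
        · exact absurd h hxw
        · exfalso
          have : x ∈ G.neighborFinset w := (SimpleGraph.mem_neighborFinset ..).mpr h
          rw [hNw] at this
          simp at this
          tauto
      · rcases Set.mem_insert_iff.mp hx with h | h
        · exact absurd h hxp
        · exact h
  have hdega : G.degree a = Fintype.card V - 2 := by
    refine le_antisymm (hmax ▸ G.degree_le_maxDegree a) ?_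
    have hsub : (Finset.univ.erase a).erase b ⊆ G.neighborFinset a := by
      intro x hx
      have hxb : x ≠ b := Finset.ne_of_mem_erase hx
      have hxa : x ≠ a := Finset.ne_of_mem_erase (Finset.mem_of_mem_erase hx)
      exact (SimpleGraph.mem_neighborFinset ..).mpr (key a haw x hxa hxb hxa)
    have hcard : ((Finset.univ.erase a).erase b).card = Fintype.card V - 2 := by
      rw [Finset.card_erase_of_mem (Finset.mem_erase.mpr ⟨hab.symm, Finset.mem_univ b⟩),
        Finset.card_erase_of_mem (Finset.mem_univ a), Finset.card_univ]
      omega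
    calc Fintype.card V - 2 = _ := hcard.symm
      _ ≤ _ := Finset.card_le_card hsub
      _ = G.degree a := G.card_neighborFinset_eq_degree a
  have hdegb : G.degree b = Fintype.card V - 2 := by
    refine le_antisymm (hmax ▸ G.degree_le_maxDegree b) ?_
    have hsub : (Finset.univ.erase a).erase b ⊆ G.neighborFinset b := by
      intro x hx
      have hxb : x ≠ b := Finset.ne_of_mem_erase hx
      have hxa : x ≠ a := Finset.ne_of_mem_erase (Finset.mem_of_mem_erase hx)
      exact (SimpleGraph.mem_neighborFinset ..).mpr (key b hbw x hxa hxb hxb)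
    have hcard : ((Finset.univ.erase a).erase b).card = Fintype.card V - 2 := by
      rw [Finset.card_erase_of_mem (Finset.mem_erase.mpr ⟨hab.symm, Finset.mem_univ b⟩),
        Finset.card_erase_of_mem (Finset.mem_univ a), Finset.card_univ]
      omega
    calc Fintype.card V - 2 = _ := hcard.symm
      _ ≤ _ := Finset.card_le_card hsub
      _ = G.degree b := G.card_neighborFinset_eq_degree b
  intro v
  by_cases hva : v = a
  · exact Or.inr (hva ▸ hdega)
  by_cases hvb : v = b
  · exact Or.inr (hvb ▸ hdegb)
  -- show degree v = 2
  left
  by_cases hvw : v = w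
  · exact hvw ▸ hw.symm
  -- every neighbor of v is in {a, b}
  have hsub : G.neighborFinset v ⊆ {a, b} := by
    intro c hc
    by_contra hcab
    simp only [Finset.mem_insert, Finset.mem_singleton, not_or] at hcab
    have hvc : G.Adj v c := (SimpleGraph.mem_neighborFinset ..).mp hc
    -- w not adjacent to v
    have hwv : ¬ G.Adj w v := by
      intro h
      have : v ∈ G.neighborFinset w := (SimpleGraph.mem_neighborFinset ..).mpr h
      rw [hNw] at this; simp at this; tauto
    have hwc : ¬ G.Adj w c := by
      intro h
      have : c ∈ G.neighborFinset w := (SimpleGraph.mem_neighborFinset ..).mpr h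
      rw [hNw] at this; simp at this; tauto
    have hwcne : w ≠ c := by
      intro h; subst h; exact hwv (hvc.symm)
    have hx : w ∈ (insert v (G.neighborSet v)) ∪ (insert c (G.neighborSet c)) := by
      rw [hgood v c hvc]; trivial
    rcases hx with hx | hx <;> rcases Set.mem_insert_iff.mp hx with h | h
    · exact hvw h.symm
    · exact hwv h.symm
    · exact hwcne h
    · exact hwc h.symm
  refine le_antisymm ?_ ?_
  · calc G.degree v = (G.neighborFinset v).card := (G.card_neighborFinset_eq_degree v).symm
      _ ≤ ({a, b} : Finset V).card := Finset.card_le_card hsub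
      _ ≤ 2 := Finset.card_insert_le a {b} |>.trans (by simp)
  · exact hmin ▸ G.minDegree_le_degree v
end

section
/- Let G be a graph of order n ≥ 4 in which every vertex of degree 2 has both neighbors of degree n−2, every vertex of degree n−2 has all neighbors of degree 2, every vertex has degree 2 or n−2, and G is connected and contains a cycle. Then G is isomorphic to the complete bipartite graph K_{2,n−2}. -/
namespace SimpleGraph

variable {V : Type*}

def isoCompleteBipartiteGraphOfAdjIff (G : SimpleGraph V) (p : V → Prop) [DecidablePred p]
    (h : ∀ x y, G.Adj x y ↔ (p x ↔ ¬p y)) :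
    G ≃g completeBipartiteGraph {x // p x} {x // ¬p x} :=
  RelIso.symm
    { toEquiv := Equiv.sumCompl p
      map_rel_iff' := by rintro (⟨a, ha⟩ | ⟨a, ha⟩) (⟨b, hb⟩ | ⟨b, hb⟩) <;> simp_all }

variable [Fintype V] {G : SimpleGraph V} [DecidableRel G.Adj]

theorem exists_degree_eq_of_forall_adj_degree [Nonempty V] {d : ℕ}
    (hall : ∀ v, G.degree v = 2 ∨ G.degree v = d)
    (h2 : ∀ v, G.degree v = 2 → ∀ u, G.Adj v u → G.degree u = d) : ∃ v, G.degree v = d := by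
  obtain ⟨x⟩ := ‹Nonempty V›
  rcases hall x with hx | hx
  · obtain ⟨u, hu⟩ := (G.degree_pos_iff_exists_adj x).mp (by omega)
    exact ⟨u, h2 x hx u hu⟩
  · exact ⟨x, hx⟩

theorem adj_of_forall_adj_imp_of_degree_le {v w u : V} (hsub : ∀ x, G.Adj w x → G.Adj v x)
    (hdeg : G.degree v ≤ G.degree w) (hu : G.Adj v u) : G.Adj w u := by
  have hN : G.neighborFinset w = G.neighborFinset v :=
    Finset.eq_of_subset_of_card_le (fun x hx => by simpa using hsub x (by simpa using hx))
      (by simpa only [card_neighborFinset_eq_degree] using hdeg)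
  rwa [← mem_neighborFinset, hN, mem_neighborFinset]

variable [DecidableEq V]

theorem exists_nonadj_of_degree_add_two {v : V} (h : G.degree v + 2 = Fintype.card V) :
    ∃ w, w ≠ v ∧ ¬G.Adj v w ∧ ∀ u, u ≠ v → u ≠ w → G.Adj v u := by
  have hcard : (insert v (G.neighborFinset v))ᶜ.card = 1 := by
    rw [Finset.card_compl, Finset.card_insert_of_notMem (G.notMem_neighborFinset_self v),
      card_neighborFinset_eq_degree]
    omega
  obtain ⟨w, hw⟩ := Finset.card_eq_one.mp hcard
  have hmem : ∀ u, u ∈ ({w} : Finset V) ↔ u ≠ v ∧ ¬G.Adj v u := by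
    intro u; rw [← hw]; simp
  obtain ⟨hwv, hvw⟩ := (hmem w).mp (Finset.mem_singleton_self w)
  refine ⟨w, hwv, hvw, fun u huv huw => ?_⟩
  by_contra hu
  exact huw (Finset.mem_singleton.mp ((hmem u).mpr ⟨huv, hu⟩))

theorem neighborFinset_eq_pair {u v w : V} (hvw : v ≠ w) (hv : G.Adj u v) (hw : G.Adj u w)
    (hu : G.degree u = 2) : G.neighborFinset u = {v, w} :=
  (Finset.eq_of_subset_of_card_le (by simp [Finset.insert_subset_iff, hv, hw])
    (by rw [card_neighborFinset_eq_degree, hu, Finset.card_pair hvw])).symm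

theorem nonempty_iso_completeBipartiteGraph_of_hubs {v w : V} (hvw : v ≠ w)
    (hnadj : ¬G.Adj v w) (hv : ∀ u, u ≠ v → u ≠ w → G.Adj v u)
    (hw : ∀ u, u ≠ v → u ≠ w → G.Adj w u) (hdeg : ∀ u, u ≠ v → u ≠ w → G.degree u = 2) :
    Nonempty (G ≃g completeBipartiteGraph (Fin 2) (Fin (Fintype.card V - 2))) := by
  set S : Finset V := {v, w}
  have hS : S.card = 2 := Finset.card_pair hvw
  have hout : ∀ x, x ∉ S → ∀ y, G.Adj x y ↔ y ∈ S := by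
    intro x hx y
    have hxv : x ≠ v := by rintro rfl; simp [S] at hx
    have hxw : x ≠ w := by rintro rfl; simp [S] at hx
    rw [← mem_neighborFinset, neighborFinset_eq_pair hvw (hv x hxv hxw).symm (hw x hxv hxw).symm
      (hdeg x hxv hxw)]
  have hadj : ∀ x y, G.Adj x y ↔ (x ∈ S ↔ y ∉ S) := by
    intro x y
    by_cases hx : x ∈ S
    · by_cases hy : y ∈ S
      · simp only [hx, hy, not_true_eq_false, iff_false]
        have hmemS : ∀ z, z ∈ S ↔ z = v ∨ z = w := by simp [S]
        rw [hmemS] at hx hy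
        rcases hx with rfl | rfl <;> rcases hy with rfl | rfl
        exacts [G.irrefl, hnadj, fun h => hnadj h.symm, G.irrefl]
      · rw [G.adj_comm, hout y hy]
        simp [hx, hy]
    · simp [hout x hx, hx]
  exact ⟨(G.isoCompleteBipartiteGraphOfAdjIff (· ∈ S) hadj).trans
    (completeBipartiteGraphCongr (Fintype.equivFinOfCardEq (by simpa using hS))
      (Fintype.equivFinOfCardEq (by rw [Fintype.card_subtype_compl, Fintype.card_coe, hS])))⟩

end SimpleGraph

theorem stmt18_general {V : Type*} [Fintype V] [DecidableEq V] (G : SimpleGraph V) [DecidableRel G.Adj]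
    (n : ℕ) (hcard : Fintype.card V = n) (hn : 4 ≤ n)
    (h2 : ∀ v : V, G.degree v = 2 → ∀ u : V, G.Adj v u → G.degree u = n - 2)
    (hn2 : ∀ v : V, G.degree v = n - 2 → ∀ u : V, G.Adj v u → G.degree u = 2)
    (hall : ∀ v : V, G.degree v = 2 ∨ G.degree v = n - 2) :
    Nonempty (G ≃g completeBipartiteGraph (Fin 2) (Fin (n - 2))) := by
  have : Nonempty V := Fintype.card_pos_iff.mp (by omega)
  obtain ⟨v, hv⟩ := SimpleGraph.exists_degree_eq_of_forall_adj_degree hall h2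
  have hv_card : G.degree v + 2 = Fintype.card V := by omega
  obtain ⟨w, hwv, hvw, hv_adj⟩ := SimpleGraph.exists_nonadj_of_degree_add_two hv_card
  have hdeg : ∀ u, u ≠ v → u ≠ w → G.degree u = 2 := fun u huv huw => hn2 v hv u (hv_adj u huv huw)
  have hw_nbr : ∀ u, G.Adj w u → G.Adj v u := fun u hu =>
    hv_adj u (by rintro rfl; exact hvw hu.symm) hu.ne'
  have hw : G.degree w = n - 2 := by
    rcases hall w with h | h
    · obtain ⟨u, hu⟩ := (G.degree_pos_iff_exists_adj w).mp (by omega)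
      have hu2 := hdeg u (hw_nbr u hu).ne' hu.ne'
      have hun := h2 w h u hu
      omega
    · exact h
  have hw_adj : ∀ u, u ≠ v → u ≠ w → G.Adj w u := fun u huv huw =>
    SimpleGraph.adj_of_forall_adj_imp_of_degree_le hw_nbr (hv.trans hw.symm).le (hv_adj u huv huw)
  exact hcard ▸
    SimpleGraph.nonempty_iso_completeBipartiteGraph_of_hubs hwv.symm hvw hv_adj hw_adj hdeg

theorem stmt18 {V : Type*} [Fintype V] [DecidableEq V] (G : SimpleGraph V) [DecidableRel G.Adj]
    (n : ℕ) (hcard : Fintype.card V = n) (hn : 4 ≤ n)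
    (hconn : G.Connected) (hcyc : ¬ G.IsAcyclic)
    (h2 : ∀ v : V, G.degree v = 2 → ∀ u : V, G.Adj v u → G.degree u = n - 2)
    (hn2 : ∀ v : V, G.degree v = n - 2 → ∀ u : V, G.Adj v u → G.degree u = 2)
    (hall : ∀ v : V, G.degree v = 2 ∨ G.degree v = n - 2) :
    Nonempty (G ≃g completeBipartiteGraph (Fin 2) (Fin (n - 2))) :=
  stmt18_general G n hcard hn h2 hn2 hall
end
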